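/- Let c₁ > 0, c₂ > 0 and a > 0. Then ∫_{-a√π/2}^{a√π/2} ∫_{-a√π/2}^{a√π/2} sinc²(c₁ x) · sinc²(c₂ y) dx dy = (4/(π a² c₁² c₂²)) · [c₁ a √π · Si(c₁ a √π) + cos(c₁ a √π) − 1] · [c₂ a √π · Si(c₂ a √π) + cos(c₂ a √π) − 1]. -/

import Mathlib

open Real MeasureTheory

/-- `_root_.sinc u = sin u / u` for `u ≠ 0`, and `_root_.sinc 0 = 1`. -/
noncomputable def sinc (u : ℝ) : ℝ := if u = 0 then 1 else Real.sin u / u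

/-- The sine integral `Si x = ∫₀ˣ (sin t)/t dt`. -/
noncomputable def Si (x : ℝ) : ℝ := ∫ t in (0:ℝ)..x, Real.sin t / t

lemma sinc_neg (u : ℝ) : _root_.sinc (-u) = _root_.sinc u := by
  unfold _root_.sinc
  rcases eq_or_ne u 0 with rfl | h
  · simp
  · simp [h, neg_div_neg_eq]

lemma continuous_sinc : Continuous _root_.sinc := by
  rw [continuous_iff_continuousAt]
  intro x
  rcases eq_or_ne x 0 with rfl | hx
  · rw [← continuousWithinAt_compl_self]
    have h : Filter.Tendsto (fun u : ℝ => Real.sin u / u) (nhdsWithin 0 {(0:ℝ)}ᶜ) (nhds 1) := by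
      have h0 := hasDerivAt_iff_tendsto_slope.mp (Real.hasDerivAt_sin 0)
      rw [Real.cos_zero] at h0
      exact h0.congr (fun u => by simp [slope_def_field])
    have : Filter.Tendsto _root_.sinc (nhdsWithin 0 {(0:ℝ)}ᶜ) (nhds 1) := by
      refine h.congr' ?_
      filter_upwards [self_mem_nhdsWithin] with u hu
      have hu' : u ≠ 0 := hu
      simp [_root_.sinc, hu']
    simpa [ContinuousWithinAt, _root_.sinc] using this
  · have : ContinuousAt (fun u : ℝ => Real.sin u / u) x :=
      (Real.continuous_sin.continuousAt).div continuousAt_id hx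
    refine this.congr ?_
    filter_upwards [isOpen_compl_singleton.mem_nhds hx] with u hu
    have hu' : u ≠ 0 := hu
    simp [_root_.sinc, hu']

lemma Si_eq (x : ℝ) : Si x = ∫ t in (0:ℝ)..x, _root_.sinc t := by
  unfold Si
  refine intervalIntegral.integral_congr_ae ?_
  have h0 : (volume : Measure ℝ) {(0:ℝ)} = 0 := measure_singleton 0
  filter_upwards [measure_eq_zero_iff_ae_notMem.mp h0] with t ht _
  have : t ≠ 0 := ht
  simp [_root_.sinc, this]

lemma hasDerivAt_Si (y : ℝ) : HasDerivAt Si (_root_.sinc y) y := by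
  have : Si = fun x => ∫ t in (0:ℝ)..x, _root_.sinc t := funext Si_eq
  rw [this]
  exact intervalIntegral.integral_hasDerivAt_right
    (_root_.continuous_sinc.intervalIntegrable _ _)
    (_root_.continuous_sinc.stronglyMeasurable.stronglyMeasurableAtFilter)
    _root_.continuous_sinc.continuousAt

/-- Auxiliary function: G c x = (1 - cos (2 c x))/(2 c² x), extended by 0. -/
noncomputable def G (c x : ℝ) : ℝ := if x = 0 then 0 else (1 - Real.cos (2*c*x)) / (2*c^2*x)

lemma continuousAt_G_zero (c : ℝ) (hc : c ≠ 0) : ContinuousAt (G c) 0 := by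
  rw [← continuousWithinAt_compl_self]
  have h : Filter.Tendsto (fun u : ℝ => (Real.cos u - 1) / u) (nhdsWithin 0 {(0:ℝ)}ᶜ) (nhds 0) := by
    have h0 := hasDerivAt_iff_tendsto_slope.mp (Real.hasDerivAt_cos 0)
    rw [Real.sin_zero, neg_zero] at h0
    exact h0.congr (fun u => by simp [slope_def_field])
  have hmap : Filter.Tendsto (fun x : ℝ => 2*c*x) (nhdsWithin 0 {(0:ℝ)}ᶜ)
      (nhdsWithin 0 {(0:ℝ)}ᶜ) := by
    rw [tendsto_nhdsWithin_iff]
    constructor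
    · have : Filter.Tendsto (fun x : ℝ => 2*c*x) (nhds 0) (nhds (2*c*0)) :=
        (continuous_const.mul continuous_id).tendsto 0
      simpa using this.mono_left nhdsWithin_le_nhds
    · filter_upwards [self_mem_nhdsWithin] with x hx
      have hx' : x ≠ 0 := hx
      simp only [Set.mem_compl_iff, Set.mem_singleton_iff]
      exact mul_ne_zero (mul_ne_zero two_ne_zero hc) hx' 
  have h2 : Filter.Tendsto (fun x : ℝ => (Real.cos (2*c*x) - 1) / (2*c*x))
      (nhdsWithin 0 {(0:ℝ)}ᶜ) (nhds 0) := h.comp hmap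
  have h3 : Filter.Tendsto (G c) (nhdsWithin 0 {(0:ℝ)}ᶜ) (nhds 0) := by
    have := h2.const_mul (-(1/c))
    rw [mul_zero] at this
    refine this.congr' ?_
    filter_upwards [self_mem_nhdsWithin] with x hx
    have hx' : x ≠ 0 := hx
    simp only [G, hx', if_false]
    field_simp
    try ring
    try simp
  simpa [ContinuousWithinAt, G] using h3

lemma continuous_G (c : ℝ) (hc : c ≠ 0) : Continuous (G c) := by
  rw [continuous_iff_continuousAt]
  intro x
  rcases eq_or_ne x 0 with rfl | hx
  · exact continuousAt_G_zero c hc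
  · have : ContinuousAt (fun x : ℝ => (1 - Real.cos (2*c*x)) / (2*c^2*x)) x := by
      apply ContinuousAt.div
      · fun_prop
      · fun_prop
      · positivity
    refine this.congr ?_
    filter_upwards [isOpen_compl_singleton.mem_nhds hx] with u hu
    simp [G, (show u ≠ 0 from hu)]

lemma hasDerivAt_H (c : ℝ) (hc : c ≠ 0) {x : ℝ} (hx : x ≠ 0) :
    HasDerivAt (fun x => (1/c) * Si (2*c*x) - G c x) (_root_.sinc (c*x)^2) x := by
  have h1 : HasDerivAt (fun x => (1/c) * Si (2*c*x)) (2 * _root_.sinc (2*c*x)) x := by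
    have := ((hasDerivAt_Si (2*c*x)).comp x (((hasDerivAt_id x).const_mul (2*c))))
    have := this.const_mul (1/c)
    refine this.congr_deriv ?_
    field_simp
  have h2 : HasDerivAt (G c)
      ((Real.sin (2*c*x) * (2*c) * (2*c^2*x) - (1 - Real.cos (2*c*x)) * (2*c^2)) / (2*c^2*x)^2) x := by
    have hd : HasDerivAt (fun x : ℝ => (1 - Real.cos (2*c*x)) / (2*c^2*x))
        ((Real.sin (2*c*x) * (2*c) * (2*c^2*x) - (1 - Real.cos (2*c*x)) * (2*c^2)) / (2*c^2*x)^2) x := by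
      apply HasDerivAt.div
      · have hlin : HasDerivAt (fun x : ℝ => 2*c*x) (2*c) x := by
          simpa using (hasDerivAt_id x).const_mul (2*c)
        have : HasDerivAt (fun x : ℝ => Real.cos (2*c*x)) (-Real.sin (2*c*x) * (2*c)) x :=
          (Real.hasDerivAt_cos (2*c*x)).comp x hlin
        have := (hasDerivAt_const x (1:ℝ)).sub this
        refine this.congr_deriv ?_
        ring
      · simpa using (hasDerivAt_id x).const_mul (2*c^2)
      · positivity
    refine hd.congr_of_eventuallyEq ?_
    filter_upwards [isOpen_compl_singleton.mem_nhds hx] with u hu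
    simp [G, (show u ≠ 0 from hu)]
  have h := h1.sub h2
  refine h.congr_deriv ?_
  have h2c : (2:ℝ)*c*x ≠ 0 := by
    simp only [ne_eq, mul_eq_zero]
    push_neg
    exact ⟨⟨by norm_num, hc⟩, hx⟩
  have hcx : c*x ≠ 0 := mul_ne_zero hc hx
  have hcos : Real.cos (2*(c*x)) = 1 - 2 * Real.sin (c*x)^2 := by
    rw [Real.cos_two_mul]
    nlinarith [Real.sin_sq_add_cos_sq (c*x)]
  have hsin : Real.sin (2*(c*x)) = 2 * Real.sin (c*x) * Real.cos (c*x) := Real.sin_two_mul (c*x)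
  simp only [_root_.sinc, hcx, h2c, if_false]
  rw [show (2:ℝ)*c*x = 2*(c*x) by ring] at *
  rw [hcos, hsin]
  field_simp
  ring

lemma integrable_sinc_sq (c A B : ℝ) :
    IntervalIntegrable (fun x => _root_.sinc (c*x)^2) volume A B :=
  (((_root_.continuous_sinc.comp (continuous_const.mul continuous_id)).pow 2)).intervalIntegrable A B

lemma integral_sinc_sq (c L : ℝ) (hc : 0 < c) (hL : 0 < L) :
    ∫ x in (0:ℝ)..L, _root_.sinc (c*x)^2
      = (1/c) * Si (2*c*L) - (1 - Real.cos (2*c*L)) / (2*c^2*L) := by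
  have key := intervalIntegral.integral_eq_sub_of_hasDeriv_right_of_le (f := fun x => (1/c) * Si (2*c*x) - G c x)
    (f' := fun x => _root_.sinc (c*x)^2) hL.le
    (Continuous.continuousOn (by
      have hSi : Continuous Si := by
        have : Differentiable ℝ Si := fun y => (hasDerivAt_Si y).differentiableAt
        exact this.continuous
      exact (continuous_const.mul (hSi.comp (continuous_const.mul continuous_id))).sub
        (continuous_G c hc.ne')))
    (fun x hx => (hasDerivAt_H c hc.ne' (ne_of_gt hx.1)).hasDerivWithinAt)
    (integrable_sinc_sq c 0 L)
  rw [key]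
  simp [G, hL.ne', Si, intervalIntegral.integral_same]

lemma integral_sinc_sq_symm (c L : ℝ) (hc : 0 < c) (hL : 0 < L) :
    ∫ x in (-L)..L, _root_.sinc (c*x)^2
      = 2 * ((1/c) * Si (2*c*L) - (1 - Real.cos (2*c*L)) / (2*c^2*L)) := by
  have hsplit : ∫ x in (-L)..L, _root_.sinc (c*x)^2
      = (∫ x in (-L)..(0:ℝ), _root_.sinc (c*x)^2) + ∫ x in (0:ℝ)..L, _root_.sinc (c*x)^2 :=
    (intervalIntegral.integral_add_adjacent_intervals (integrable_sinc_sq c (-L) 0)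
      (integrable_sinc_sq c 0 L)).symm
  have heven : (∫ x in (-L)..(0:ℝ), _root_.sinc (c*x)^2) = ∫ x in (0:ℝ)..L, _root_.sinc (c*x)^2 := by
    have := intervalIntegral.integral_comp_neg (a := (0:ℝ)) (b := L) (fun x => _root_.sinc (c*x)^2)
    rw [neg_zero] at this
    rw [← this]
    apply intervalIntegral.integral_congr
    intro x _
    simp only []
    rw [show c * -x = -(c*x) by ring, _root_.sinc_neg]
  rw [hsplit, heven, integral_sinc_sq c L hc hL]
  ring

/-- Power of the _root_.sinc-shaped field `_root_.sinc(c₁ x) _root_.sinc(c₂ y)` collected over a square lens of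
side length `a√π` (the computational core of Lemma 1). -/
theorem sinc_power_on_square_lens (c₁ c₂ a : ℝ) (hc₁ : 0 < c₁) (hc₂ : 0 < c₂) (ha : 0 < a) :
    (∫ x in (-(a * Real.sqrt π / 2))..(a * Real.sqrt π / 2),
      ∫ y in (-(a * Real.sqrt π / 2))..(a * Real.sqrt π / 2),
        _root_.sinc (c₁ * x) ^ 2 * _root_.sinc (c₂ * y) ^ 2) =
      (4 / (π * a ^ 2 * c₁ ^ 2 * c₂ ^ 2)) *
        (c₁ * a * Real.sqrt π * Si (c₁ * a * Real.sqrt π)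
          + Real.cos (c₁ * a * Real.sqrt π) - 1) *
        (c₂ * a * Real.sqrt π * Si (c₂ * a * Real.sqrt π)
          + Real.cos (c₂ * a * Real.sqrt π) - 1) := by
  set r := Real.sqrt π with hr
  have hrpos : 0 < r := Real.sqrt_pos.mpr Real.pi_pos
  set L := a * r / 2 with hL
  have hLpos : 0 < L := by positivity
  have hinner : ∀ x : ℝ, (∫ y in (-L)..L, _root_.sinc (c₁ * x) ^ 2 * _root_.sinc (c₂ * y) ^ 2)
      = _root_.sinc (c₁ * x) ^ 2 * (2 * ((1/c₂) * Si (2*c₂*L) - (1 - Real.cos (2*c₂*L)) / (2*c₂^2*L))) := by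
    intro x
    rw [intervalIntegral.integral_const_mul, integral_sinc_sq_symm c₂ L hc₂ hLpos]
  have houter : (∫ x in (-L)..L, ∫ y in (-L)..L, _root_.sinc (c₁ * x) ^ 2 * _root_.sinc (c₂ * y) ^ 2)
      = (2 * ((1/c₁) * Si (2*c₁*L) - (1 - Real.cos (2*c₁*L)) / (2*c₁^2*L)))
        * (2 * ((1/c₂) * Si (2*c₂*L) - (1 - Real.cos (2*c₂*L)) / (2*c₂^2*L))) := by
    rw [intervalIntegral.integral_congr (g := fun x => _root_.sinc (c₁ * x) ^ 2 *
        (2 * ((1/c₂) * Si (2*c₂*L) - (1 - Real.cos (2*c₂*L)) / (2*c₂^2*L))))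
      (fun x _ => hinner x)]
    rw [intervalIntegral.integral_mul_const, integral_sinc_sq_symm c₁ L hc₁ hLpos]
  have h2L : ∀ c : ℝ, 2*c*L = c*a*r := by intro c; rw [hL]; ring
  rw [houter]
  rw [h2L, h2L]
  have hπ : π = r^2 := (Real.sq_sqrt Real.pi_pos.le).symm
  rw [hπ, hL]
  field_simp
  ring
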